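/- Let z_1, …, z_N be distinct complex numbers, α_k := Π_{l≠k}(z_k - z_l)^{-1}, and define the modified vector field e'_k := e_k + Σ_{i=1}^N λ_{ki}E_i with λ_{ki} := -⟨Ω̃^i, e_k⟩, where e_k(z) = α_k·Π_{j≠k}(z - z_j)·d/dz, E_i(z) = (z - z_i)·Π_{s≠i}((z - z_s)²/(z_i - z_s)²)·d/dz, Ω̃^i = dz²/(z - z_i)², and ⟨·,·⟩ is the sum of residues at z_1,…,z_N of the product. Then ⟨Ω̃^i, e'_k⟩ = 0 for all 1 ≤ i, k ≤ N, while ⟨Ω^i, e'_k⟩ = ⟨Ω^i, e_k⟩ = δ_{ik} for Ω^i = dz²/(z - z_i). -/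

import Mathlib

open RatFunc

/-- The residue of a rational function `f` at a finite point `p`:
the coefficient of `(z-p)^{-1}` in the Laurent expansion of `f` at `p`. -/
noncomputable def res (p : ℂ) (f : RatFunc ℂ) : ℂ :=
  (((RatFunc.laurent p f : RatFunc ℂ) : LaurentSeries ℂ)).coeff (-1)

/-- The Krichever–Novikov pairing: the sum over the marked points `z_1,…,z_N`
of the residues of the product. -/
noncomputable def knPair {N : ℕ} (z : Fin N → ℂ) (f g : RatFunc ℂ) : ℂ :=
  ∑ p : Fin N, res (z p) (f * g)

lemma coeff_neg_ofPS (x : PowerSeries ℂ) {n : ℤ} (hn : n < 0) :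
    ((x : LaurentSeries ℂ)).coeff n = 0 := by
  rw [HahnSeries.ofPowerSeries_apply]
  apply HahnSeries.embDomain_notin_range
  rintro ⟨m, hm⟩
  change ((m : ℕ) : ℤ) = n at hm
  omega

lemma coe_poly_L (q : Polynomial ℂ) :
    ((algebraMap (Polynomial ℂ) (RatFunc ℂ) q : RatFunc ℂ) : LaurentSeries ℂ)
      = ((q : PowerSeries ℂ) : LaurentSeries ℂ) := by
  rw [RatFunc.coe_coe]; rfl

lemma res_algebraMap (p : ℂ) (q : Polynomial ℂ) :
    res p (algebraMap (Polynomial ℂ) (RatFunc ℂ) q) = 0 := by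
  rw [res, RatFunc.laurent_algebraMap, coe_poly_L]
  exact coeff_neg_ofPS _ (by norm_num)

lemma res_inv_mul (p a : ℂ) (q : Polynomial ℂ) :
    res p ((RatFunc.X - RatFunc.C a)⁻¹ * algebraMap (Polynomial ℂ) (RatFunc ℂ) q)
      = if p = a then Polynomial.eval a q else 0 := by
  have hX : RatFunc.X - RatFunc.C a
      = algebraMap (Polynomial ℂ) (RatFunc ℂ) (Polynomial.X - Polynomial.C a) := by
    simp [map_sub, RatFunc.algebraMap_X, RatFunc.algebraMap_C]
  unfold res
  rw [map_mul, map_inv₀, hX, RatFunc.laurent_algebraMap, RatFunc.laurent_algebraMap]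
  have ht : Polynomial.taylor p (Polynomial.X - Polynomial.C a)
      = Polynomial.X - Polynomial.C (a - p) := by
    simp [Polynomial.taylor_X, Polynomial.taylor_C]; ring
  rw [ht, map_mul]
  have hinv : ((((algebraMap (Polynomial ℂ) (RatFunc ℂ)
        (Polynomial.X - Polynomial.C (a - p)))⁻¹ : RatFunc ℂ)) : LaurentSeries ℂ)
      = (((algebraMap (Polynomial ℂ) (RatFunc ℂ)
        (Polynomial.X - Polynomial.C (a - p)) : RatFunc ℂ)) : LaurentSeries ℂ)⁻¹ :=
    map_inv₀ (algebraMap (RatFunc ℂ) (LaurentSeries ℂ)) _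
  rw [hinv, coe_poly_L, coe_poly_L]
  by_cases hpa : p = a
  · subst hpa
    simp only [sub_self, map_zero, sub_zero, eq_self_iff_true, if_true]
    rw [Polynomial.coe_X, HahnSeries.ofPowerSeries_X, HahnSeries.inv_single (1:ℤ) (1:ℂ), inv_one]
    have h := HahnSeries.coeff_single_mul_add (r := (1:ℂ))
      (x := (HahnSeries.ofPowerSeries ℤ ℂ) ((Polynomial.taylor p) q : PowerSeries ℂ)) (a := ((0:ℕ):ℤ)) (b := (-1 : ℤ))
    have h0 : ((0:ℕ):ℤ) + -1 = -1 := by norm_num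
    rw [h0] at h
    rw [h, one_mul, HahnSeries.ofPowerSeries_apply_coeff]
    simp [Polynomial.taylor_coeff_zero]
  · rw [if_neg hpa]
    have hc : a - p ≠ 0 := sub_ne_zero.mpr (Ne.symm hpa)
    set u : PowerSeries ℂ := ((Polynomial.X - Polynomial.C (a - p) : Polynomial ℂ) : PowerSeries ℂ)
      with hu
    have hunit : IsUnit u := by
      rw [PowerSeries.isUnit_iff_constantCoeff]
      have : PowerSeries.constantCoeff u = -(a - p) := by
        simp [hu]
      rw [this]
      exact (neg_ne_zero.mpr hc).isUnit
    obtain ⟨w, hw⟩ := hunit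
    have hmul : u * (↑w⁻¹ : PowerSeries ℂ) = 1 := by
      rw [← hw]; exact w.mul_inv
    have hinvL : ((u : LaurentSeries ℂ))⁻¹ = ((↑w⁻¹ : PowerSeries ℂ) : LaurentSeries ℂ) := by
      apply inv_eq_of_mul_eq_one_right
      rw [← PowerSeries.coe_mul, hmul, PowerSeries.coe_one]
    rw [hinvL, ← PowerSeries.coe_mul]
    exact coeff_neg_ofPS _ (by norm_num)

lemma res_zero (p : ℂ) : res p 0 = 0 := by
  unfold res; simp

lemma res_add (p : ℂ) (f g : RatFunc ℂ) : res p (f + g) = res p f + res p g := by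
  unfold res; rw [map_add, map_add]; simp [HahnSeries.coeff_add]

lemma res_C_mul (p c : ℂ) (f : RatFunc ℂ) : res p (RatFunc.C c * f) = c * res p f := by
  unfold res
  rw [map_mul, RatFunc.laurent_C, map_mul, (show ((RatFunc.C c : RatFunc ℂ) : LaurentSeries ℂ) = HahnSeries.C c by
    rw [← RatFunc.algebraMap_C, coe_poly_L, Polynomial.coe_C, PowerSeries.coe_C])]
  have h := HahnSeries.coeff_single_mul_add (r := c)
    (x := ((RatFunc.laurent p f : RatFunc ℂ) : LaurentSeries ℂ)) (a := (-1 : ℤ)) (b := (0 : ℤ))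
  simpa using h

lemma res_sum {ι : Type*} (p : ℂ) (s : Finset ι) (g : ι → RatFunc ℂ) :
    res p (∑ j ∈ s, g j) = ∑ j ∈ s, res p (g j) := by
  classical
  induction s using Finset.induction_on with
  | empty => simp [res_zero]
  | insert _ _ h ih => simp [Finset.sum_insert h, res_add, ih]

lemma knPair_add {N : ℕ} (z : Fin N → ℂ) (f g h : RatFunc ℂ) :
    knPair z f (g + h) = knPair z f g + knPair z f h := by
  simp [knPair, mul_add, res_add, Finset.sum_add_distrib]

lemma knPair_C_mul {N : ℕ} (z : Fin N → ℂ) (c : ℂ) (f g : RatFunc ℂ) :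
    knPair z f (RatFunc.C c * g) = c * knPair z f g := by
  have h : ∀ p : Fin N, res (z p) (f * (RatFunc.C c * g)) = c * res (z p) (f * g) := by
    intro p; rw [mul_left_comm, res_C_mul]
  simp [knPair, h, Finset.mul_sum]

lemma knPair_sum {N : ℕ} {ι : Type*} (z : Fin N → ℂ) (f : RatFunc ℂ) (s : Finset ι)
    (g : ι → RatFunc ℂ) :
    knPair z f (∑ j ∈ s, g j) = ∑ j ∈ s, knPair z f (g j) := by
  unfold knPair
  have h : ∀ p : Fin N, res (z p) (f * ∑ j ∈ s, g j) = ∑ j ∈ s, res (z p) (f * g j) := by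
    intro p; rw [Finset.mul_sum, res_sum]
  rw [Finset.sum_congr rfl fun p _ => h p, Finset.sum_comm]

/-- Adjusting the degree-(-1) KN vector fields by vertical ones:
with `e_k(z) = α_k·Π_{j≠k}(z-z_j)`, `E_i(z) = (z-z_i)·Π_{s≠i}(z-z_s)²/(z_i-z_s)²`,
`Ω̃^i = 1/(z-z_i)²`, `Ω^i = 1/(z-z_i)` and `e'_k = e_k + Σ_i λ_{ki}E_i` where
`λ_{ki} = -⟨Ω̃^i, e_k⟩`, one has `⟨Ω̃^i, e'_k⟩ = 0` while
`⟨Ω^i, e'_k⟩ = ⟨Ω^i, e_k⟩ = δ_{ik}`. -/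
theorem stmt14 {N : ℕ} (z : Fin N → ℂ) (hz : Function.Injective z)
    (ek E Ωt Ω : Fin N → RatFunc ℂ)
    (hek : ∀ k, ek k = RatFunc.C (∏ l ∈ Finset.univ.erase k, (z k - z l)⁻¹) *
      ∏ j ∈ Finset.univ.erase k, (RatFunc.X - RatFunc.C (z j)))
    (hE : ∀ i, E i = (RatFunc.X - RatFunc.C (z i)) *
      ∏ s ∈ Finset.univ.erase i,
        ((RatFunc.X - RatFunc.C (z s)) ^ 2 * RatFunc.C (((z i - z s) ^ 2)⁻¹)))
    (hΩt : ∀ i, Ωt i = ((RatFunc.X - RatFunc.C (z i)) ^ 2)⁻¹)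
    (hΩ : ∀ i, Ω i = (RatFunc.X - RatFunc.C (z i))⁻¹)
    (lam : Fin N → Fin N → ℂ)
    (hlam : ∀ k i, lam k i = -(knPair z (Ωt i) (ek k)))
    (ek' : Fin N → RatFunc ℂ)
    (hek' : ∀ k, ek' k = ek k + ∑ i : Fin N, RatFunc.C (lam k i) * E i) :
    ∀ i k : Fin N,
      knPair z (Ωt i) (ek' k) = 0 ∧
      knPair z (Ω i) (ek' k) = (if i = k then 1 else 0) ∧
      knPair z (Ω i) (ek k) = (if i = k then 1 else 0) := by
  classical
  intro i k
  -- basic nonvanishing facts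
  have hne : ∀ a b : Fin N, a ≠ b → z a - z b ≠ 0 := fun a b hab =>
    sub_ne_zero.mpr (fun h => hab (hz h))
  have hXC : ∀ a : ℂ, RatFunc.X - RatFunc.C a
      = algebraMap (Polynomial ℂ) (RatFunc ℂ) (Polynomial.X - Polynomial.C a) := by
    intro a; rw [map_sub, RatFunc.algebraMap_X, RatFunc.algebraMap_C]
  have hXC0 : ∀ a : ℂ, (RatFunc.X - RatFunc.C a) ≠ 0 := by
    intro a
    rw [hXC]
    exact RatFunc.algebraMap_ne_zero (Polynomial.X_sub_C_ne_zero a)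
  -- polynomial forms
  set P : Fin N → Polynomial ℂ := fun k =>
    Polynomial.C (∏ l ∈ Finset.univ.erase k, (z k - z l)⁻¹) *
      ∏ j ∈ Finset.univ.erase k, (Polynomial.X - Polynomial.C (z j)) with hP
  have hekA : ∀ k, ek k = algebraMap (Polynomial ℂ) (RatFunc ℂ) (P k) := by
    intro k
    rw [hek, hP]
    simp only [map_mul, map_prod, map_sub, RatFunc.algebraMap_X, RatFunc.algebraMap_C]
  -- the fundamental residue-sum computations
  have sum_inv : ∀ (a : Fin N) (q : Polynomial ℂ),
      knPair z ((RatFunc.X - RatFunc.C (z a))⁻¹) (algebraMap (Polynomial ℂ) (RatFunc ℂ) q)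
        = Polynomial.eval (z a) q := by
    intro a q
    unfold knPair
    simp [res_inv_mul, hz.eq_iff]
  have sum_poly : ∀ (f : RatFunc ℂ) (q : Polynomial ℂ),
      f * algebraMap (Polynomial ℂ) (RatFunc ℂ) q = algebraMap (Polynomial ℂ) (RatFunc ℂ) q →
      True := fun _ _ _ => trivial
  -- (3)  ⟨Ω i, ek k⟩ = δ i k
  have h3 : ∀ k', knPair z (Ω i) (ek k') = (if i = k' then 1 else 0) := by
    intro k'
    rw [hΩ, hekA, sum_inv]
    rw [hP]
    simp only [Polynomial.eval_mul, Polynomial.eval_C, Polynomial.eval_prod,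
      Polynomial.eval_sub, Polynomial.eval_X]
    by_cases hik : i = k'
    · subst hik
      rw [if_pos rfl, ← Finset.prod_mul_distrib]
      rw [Finset.prod_congr rfl (fun l hl => inv_mul_cancel₀
        (hne i l (Ne.symm (Finset.mem_erase.mp hl).1)))]
      exact Finset.prod_const_one
    · rw [if_neg hik]
      have hzero : (∏ l ∈ Finset.univ.erase k', (z i - z l)) = 0 :=
        Finset.prod_eq_zero (Finset.mem_erase.mpr ⟨hik, Finset.mem_univ i⟩) (sub_self _)
      rw [hzero, mul_zero]
  -- knPair only depends on the product
  have knPair_congr : ∀ (f g f' g' : RatFunc ℂ), f * g = f' * g' →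
      knPair z f g = knPair z f' g' := by
    intro f g f' g' h; unfold knPair; rw [h]
  -- polynomial form of E
  set Q : Fin N → Polynomial ℂ := fun j =>
    (Polynomial.X - Polynomial.C (z j)) * ∏ s ∈ Finset.univ.erase j,
      ((Polynomial.X - Polynomial.C (z s)) ^ 2 * Polynomial.C (((z j - z s) ^ 2)⁻¹)) with hQ
  have hEA : ∀ j, E j = algebraMap (Polynomial ℂ) (RatFunc ℂ) (Q j) := by
    intro j
    rw [hE, hQ]
    simp only [map_mul, map_prod, map_sub, map_pow, RatFunc.algebraMap_X, RatFunc.algebraMap_C]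
  -- (2)  ⟨Ω i, E j⟩ = 0
  have h2 : ∀ j, knPair z (Ω i) (E j) = 0 := by
    intro j
    rw [hΩ, hEA, sum_inv, hQ]
    simp only [Polynomial.eval_mul, Polynomial.eval_prod, Polynomial.eval_sub,
      Polynomial.eval_X, Polynomial.eval_C, Polynomial.eval_pow]
    by_cases hij : i = j
    · subst hij; rw [sub_self, zero_mul]
    · have hzero : (∏ s ∈ Finset.univ.erase j, ((z i - z s) ^ 2 * ((z j - z s) ^ 2)⁻¹)) = 0 :=
        Finset.prod_eq_zero (Finset.mem_erase.mpr ⟨hij, Finset.mem_univ i⟩)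
          (by rw [sub_self]; ring)
      rw [hzero, mul_zero]
  -- (1)  ⟨Ωt i, E j⟩ = δ i j
  have h1 : ∀ j, knPair z (Ωt i) (E j) = (if i = j then 1 else 0) := by
    intro j
    by_cases hij : i = j
    · subst hij
      rw [if_pos rfl]
      set R : Polynomial ℂ := ∏ s ∈ Finset.univ.erase i,
        ((Polynomial.X - Polynomial.C (z s)) ^ 2 * Polynomial.C (((z i - z s) ^ 2)⁻¹)) with hR
      have hprod : Ωt i * E i = (RatFunc.X - RatFunc.C (z i))⁻¹ *
          algebraMap (Polynomial ℂ) (RatFunc ℂ) R := by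
        rw [hΩt, hE, hR]
        have hRA : (∏ s ∈ Finset.univ.erase i,
            ((RatFunc.X - RatFunc.C (z s)) ^ 2 * RatFunc.C (((z i - z s) ^ 2)⁻¹)))
            = algebraMap (Polynomial ℂ) (RatFunc ℂ) (∏ s ∈ Finset.univ.erase i,
              ((Polynomial.X - Polynomial.C (z s)) ^ 2 * Polynomial.C (((z i - z s) ^ 2)⁻¹))) := by
          simp only [map_prod, map_mul, map_pow, map_sub, RatFunc.algebraMap_X,
            RatFunc.algebraMap_C]
        rw [hRA]
        have ha := hXC0 (z i)
        generalize (algebraMap (Polynomial ℂ) (RatFunc ℂ)) (∏ s ∈ Finset.univ.erase i,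
          ((Polynomial.X - Polynomial.C (z s)) ^ 2 * Polynomial.C (((z i - z s) ^ 2)⁻¹))) = r
        rw [sq, mul_inv, mul_assoc, ← mul_assoc _ _ r, inv_mul_cancel₀ ha, one_mul]
      rw [knPair_congr _ _ _ _ hprod, sum_inv, hR]
      simp only [Polynomial.eval_prod, Polynomial.eval_mul, Polynomial.eval_pow,
        Polynomial.eval_sub, Polynomial.eval_X, Polynomial.eval_C]
      rw [Finset.prod_congr rfl (fun s hs => mul_inv_cancel₀
        (pow_ne_zero 2 (hne i s (Ne.symm (Finset.mem_erase.mp hs).1))))]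
      exact Finset.prod_const_one
    · rw [if_neg hij]
      have hmem : i ∈ Finset.univ.erase j := Finset.mem_erase.mpr ⟨hij, Finset.mem_univ i⟩
      set T : Polynomial ℂ := (Polynomial.X - Polynomial.C (z j)) *
        (Polynomial.C (((z j - z i) ^ 2)⁻¹) * ∏ s ∈ (Finset.univ.erase j).erase i,
          ((Polynomial.X - Polynomial.C (z s)) ^ 2 * Polynomial.C (((z j - z s) ^ 2)⁻¹))) with hT
      have hprod : Ωt i * E j = algebraMap (Polynomial ℂ) (RatFunc ℂ) T := by
        rw [hΩt, hEA, hT]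
        simp only [hQ]
        have hsplit : (∏ s ∈ Finset.univ.erase j,
            ((Polynomial.X - Polynomial.C (z s)) ^ 2 * Polynomial.C (((z j - z s) ^ 2)⁻¹)))
            = ((Polynomial.X - Polynomial.C (z i)) ^ 2 * Polynomial.C (((z j - z i) ^ 2)⁻¹)) *
              ∏ s ∈ (Finset.univ.erase j).erase i,
                ((Polynomial.X - Polynomial.C (z s)) ^ 2 * Polynomial.C (((z j - z s) ^ 2)⁻¹)) :=
          (Finset.mul_prod_erase _ _ hmem).symm
        rw [hsplit]
        simp only [map_mul, map_pow, map_sub, RatFunc.algebraMap_X, RatFunc.algebraMap_C]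
        have hb : ((RatFunc.X - RatFunc.C (z i)) ^ 2 : RatFunc ℂ) ≠ 0 :=
          pow_ne_zero 2 (hXC0 (z i))
        generalize (algebraMap (Polynomial ℂ) (RatFunc ℂ)) (∏ s ∈ (Finset.univ.erase j).erase i,
          ((Polynomial.X - Polynomial.C (z s)) ^ 2 * Polynomial.C (((z j - z s) ^ 2)⁻¹))) = r
        rw [show (RatFunc.X - RatFunc.C (z j)) * ((RatFunc.X - RatFunc.C (z i)) ^ 2 *
            RatFunc.C (((z j - z i) ^ 2)⁻¹) * r)
          = (RatFunc.X - RatFunc.C (z i)) ^ 2 * ((RatFunc.X - RatFunc.C (z j)) *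
            (RatFunc.C (((z j - z i) ^ 2)⁻¹) * r)) from by ring,
          ← mul_assoc, inv_mul_cancel₀ hb, one_mul]
      have : knPair z (Ωt i) (E j) = ∑ p : Fin N,
          res (z p) (algebraMap (Polynomial ℂ) (RatFunc ℂ) T) := by
        unfold knPair; rw [Finset.sum_congr rfl (fun p _ => by rw [hprod])]
      rw [this]
      simp [res_algebraMap]
  -- final assembly
  refine ⟨?_, ?_, h3 k⟩
  · rw [hek' k, knPair_add, knPair_sum]
    simp only [knPair_C_mul, h1, mul_ite, mul_one, mul_zero]
    rw [Finset.sum_ite_eq Finset.univ i (fun j => lam k j), if_pos (Finset.mem_univ i),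
      hlam k i]
    ring
  · rw [hek' k, knPair_add, knPair_sum]
    simp only [knPair_C_mul, h2, mul_zero, Finset.sum_const_zero, add_zero]
    exact h3 k
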